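/- Let (X,d) be a metric space and G ⊂ X an open set with nonempty boundary ∂G. Then the function j̃_G defined by j̃_G(x,y) = (1/2)·log((1 + d(x,y)/δ(x))·(1 + d(x,y)/δ(y))), where δ(x) = dist(x, ∂G), is a metric on G ∪ (X ∖ closure(G)) = X ∖ ∂G. -/

import Mathlib

open Real Filter

/-- The Gehring–Osgood metric associated to an open set `G`, where
`δ(x) = dist(x, ∂G)`. -/
noncomputable def jGehringOsgood {X : Type*} [MetricSpace X] (G : Set X) (x y : X) : ℝ :=
  (1 / 2) * Real.log ((1 + dist x y / Metric.infDist x (frontier G)) *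
    (1 + dist x y / Metric.infDist y (frontier G)))

/-!
Writing `δ = dist(·, ∂G)`, the quantity `2 j̃_G(x, y)` splits as
`log (1 + d(x,y)/δ(x)) + log (1 + d(x,y)/δ(y))`, and each summand satisfies a triangle inequality
`log (1 + d(x,y)/δ(x)) ≤ log (1 + d(x,z)/δ(x)) + log (1 + d(z,y)/δ(z))`: after exponentiating,
this follows from `d(x,y) ≤ d(x,z) + d(z,y)` together with the `1`-Lipschitz bound
`δ(z) ≤ δ(x) + d(x,z)`. Adding the two instances (the second with the roles of `x` and `y`
swapped) gives the triangle inequality for `j̃_G`.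
-/

open Metric

lemma one_add_div_le_one_add_div_mul_one_add_div {a b c u w : ℝ} (hu : 0 < u) (hw : 0 < w)
    (hc : 0 ≤ c) (habc : a ≤ b + c) (hwu : w ≤ u + b) :
    1 + a / u ≤ (1 + b / u) * (1 + c / w) := by
  have hexpand : (1 + b / u) * (1 + c / w) = 1 + b / u + c / u * ((u + b) / w) := by
    field_simp
  have hratio : 1 ≤ (u + b) / w := (one_le_div hw).2 hwu
  have hcu : 0 ≤ c / u := div_nonneg hc hu.le
  calc 1 + a / u ≤ 1 + b / u + c / u := by
        rw [add_assoc, ← add_div]; gcongr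
    _ ≤ 1 + b / u + c / u * ((u + b) / w) := by gcongr; exact le_mul_of_one_le_right hcu hratio
    _ = (1 + b / u) * (1 + c / w) := hexpand.symm

section

variable {X : Type*} [MetricSpace X]

lemma log_one_add_dist_div_infDist_le {s : Set X} {x y z : X} (hx : 0 < infDist x s)
    (hz : 0 < infDist z s) :
    log (1 + dist x y / infDist x s) ≤
      log (1 + dist x z / infDist x s) + log (1 + dist z y / infDist z s) := by
  rw [← log_mul (by positivity) (by positivity)]
  refine log_le_log (by positivity) (one_add_div_le_one_add_div_mul_one_add_div hx hz
    dist_nonneg (dist_triangle x z y) ?_)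
  rw [dist_comm x z]
  exact infDist_le_infDist_add_dist

variable {G : Set X} {x y z : X}

lemma jGehringOsgood_comm (x y : X) : jGehringOsgood G x y = jGehringOsgood G y x := by
  rw [jGehringOsgood, jGehringOsgood, dist_comm y x, mul_comm (1 + dist x y / infDist x _)]

lemma jGehringOsgood_nonneg (x y : X) : 0 ≤ jGehringOsgood G x y := by
  have h (x' : X) : 1 ≤ 1 + dist x y / infDist x' (frontier G) :=
    le_add_of_nonneg_right (div_nonneg dist_nonneg infDist_nonneg)
  unfold jGehringOsgood
  exact mul_nonneg (by norm_num) (log_nonneg (one_le_mul_of_one_le_of_one_le (h x) (h y)))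

lemma jGehringOsgood_pos (hx : 0 < infDist x (frontier G)) (hxy : x ≠ y) :
    0 < jGehringOsgood G x y := by
  have hfx : 1 < 1 + dist x y / infDist x (frontier G) :=
    lt_add_of_pos_right 1 (div_pos (dist_pos.2 hxy) hx)
  have hfy : 1 ≤ 1 + dist x y / infDist y (frontier G) :=
    le_add_of_nonneg_right (div_nonneg dist_nonneg infDist_nonneg)
  unfold jGehringOsgood
  exact mul_pos (by norm_num) (log_pos (one_lt_mul_of_lt_of_le hfx hfy))

lemma jGehringOsgood_eq_zero_iff (hx : 0 < infDist x (frontier G)) :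
    jGehringOsgood G x y = 0 ↔ x = y := by
  refine ⟨fun h => by_contra fun hxy => (jGehringOsgood_pos hx hxy).ne' h, ?_⟩
  rintro rfl
  simp [jGehringOsgood]

lemma jGehringOsgood_eq_half_add (hx : 0 < infDist x (frontier G))
    (hy : 0 < infDist y (frontier G)) :
    jGehringOsgood G x y = (log (1 + dist x y / infDist x (frontier G)) +
      log (1 + dist x y / infDist y (frontier G))) / 2 := by
  rw [jGehringOsgood, log_mul (by positivity) (by positivity)]
  ring

lemma jGehringOsgood_triangle (hx : 0 < infDist x (frontier G))
    (hy : 0 < infDist y (frontier G)) (hz : 0 < infDist z (frontier G)) :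
    jGehringOsgood G x y ≤ jGehringOsgood G x z + jGehringOsgood G z y := by
  have hxzy := log_one_add_dist_div_infDist_le (y := y) hx hz
  have hyzx := log_one_add_dist_div_infDist_le (y := x) hy hz
  rw [dist_comm y x, dist_comm y z, dist_comm z x] at hyzx
  rw [jGehringOsgood_eq_half_add hx hy, jGehringOsgood_eq_half_add hx hz,
    jGehringOsgood_eq_half_add hz hy]
  linarith

end

theorem stmt_1_general {X : Type*} [MetricSpace X] (G : Set X)
    (hGb : (frontier G).Nonempty) :
    (∀ x ∉ frontier G, ∀ y ∉ frontier G, 0 ≤ jGehringOsgood G x y) ∧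
    (∀ x ∉ frontier G, ∀ y ∉ frontier G, (jGehringOsgood G x y = 0 ↔ x = y)) ∧
    (∀ x ∉ frontier G, ∀ y ∉ frontier G, jGehringOsgood G x y = jGehringOsgood G y x) ∧
    (∀ x ∉ frontier G, ∀ y ∉ frontier G, ∀ z ∉ frontier G,
      jGehringOsgood G x y ≤ jGehringOsgood G x z + jGehringOsgood G z y) := by
  have hδ {x : X} (hx : x ∉ frontier G) : 0 < infDist x (frontier G) :=
    (isClosed_frontier.notMem_iff_infDist_pos hGb).1 hx
  exact ⟨fun x _ y _ => jGehringOsgood_nonneg x y,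
    fun _ hx _ _ => jGehringOsgood_eq_zero_iff (hδ hx),
    fun x _ y _ => jGehringOsgood_comm x y,
    fun _ hx _ hy _ hz => jGehringOsgood_triangle (hδ hx) (hδ hy) (hδ hz)⟩

theorem stmt_1 {X : Type*} [MetricSpace X] (G : Set X)
    (hG : IsOpen G) (hGb : (frontier G).Nonempty) :
    (∀ x ∉ frontier G, ∀ y ∉ frontier G, 0 ≤ jGehringOsgood G x y) ∧
    (∀ x ∉ frontier G, ∀ y ∉ frontier G, (jGehringOsgood G x y = 0 ↔ x = y)) ∧
    (∀ x ∉ frontier G, ∀ y ∉ frontier G, jGehringOsgood G x y = jGehringOsgood G y x) ∧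
    (∀ x ∉ frontier G, ∀ y ∉ frontier G, ∀ z ∉ frontier G,
      jGehringOsgood G x y ≤ jGehringOsgood G x z + jGehringOsgood G z y) :=
  stmt_1_general G hGb
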